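/- (Theorem 1, prediction norm bound.) Let c > 1 and c̄ = (c+1)/(c−1). Suppose κ̃ > 0 and that ρ̄ := λ√s/(nκ̃) < 1. If λ/n ≥ c‖Γ⁻¹S̃‖_∞, then any square-root lasso minimizer β̂ satisfies ‖β̂ − β₀‖_{2,n} ≤ 2√Q̂(β₀) · (ϱ_c̄ + ρ̄)/(1 − ρ̄²). -/

import Mathlib

/-!
Write `δ = β̂ - β₀`, `q₀ = √Q̂(β₀)` and `t = ‖δ‖_{2,n}`. The residuals at `β̂` are those at `β₀`
minus `x_i'δ`, so `Q̂(β̂) = q₀² - 2 q₀ S̃'δ + t²`; with `|S̃'δ| ≤ t` (Cauchy–Schwarz) this gives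
`√Q̂(β̂) ≥ q₀ - S̃'δ`. Comparing the objective at `β̂` and at `β₀`, the penalty increase
`(λ/n)(‖Γβ̂‖₁ - ‖Γβ₀‖₁)` is at most `S̃'δ ≤ (λ/(cn)) ‖Γδ‖₁`; this puts `δ` in the cone `Δ_c̄` and
`β̂` in the `ℓ₁`-ball used in `ϱ_c̄`, whence `S̃'δ ≤ ϱ_c̄ t`. The same comparison, together with the
definition of `κ̃`, gives `√Q̂(β̂) ≤ q₀ + ρ̄ t`. Squaring and substituting into the expansion yields
`t² ≤ 2 q₀ (ρ̄ + ϱ_c̄) t + ρ̄² t²`.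
-/

open Finset MeasureTheory ProbabilityTheory

namespace SqrtLasso

/-- Empirical average `E_n[h_i] = n⁻¹ ∑ᵢ h i`. -/
noncomputable def En (n : ℕ) (h : Fin n → ℝ) : ℝ := (∑ i, h i) / n

/-- Euclidean inner product `a'b = ∑ⱼ aⱼ bⱼ`. -/
noncomputable def dot {p : ℕ} (a b : Fin p → ℝ) : ℝ := ∑ j, a j * b j

/-- Prediction norm `‖δ‖_{2,n} = (E_n[(x_i'δ)²])^{1/2}`. -/
noncomputable def predNorm (n : ℕ) {p : ℕ} (x : Fin n → Fin p → ℝ) (δ : Fin p → ℝ) : ℝ :=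
  Real.sqrt (En n fun i => (dot (x i) δ) ^ 2)

/-- `ℓ₁` norm of a vector. -/
noncomputable def l1 {p : ℕ} (v : Fin p → ℝ) : ℝ := ∑ j, |v j|

/-- Restriction `v_S`: equal to `v` on `S` and `0` outside. -/
def restr {p : ℕ} (S : Finset (Fin p)) (v : Fin p → ℝ) : Fin p → ℝ :=
  fun j => if j ∈ S then v j else 0

/-- `Γ v`, i.e. componentwise rescaling by loadings `γ`. -/
noncomputable def scl {p : ℕ} (γ v : Fin p → ℝ) : Fin p → ℝ := fun j => γ j * v j

/-- The support of a vector. -/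
noncomputable def supp {p : ℕ} (β : Fin p → ℝ) : Finset (Fin p) := Finset.univ.filter fun j => β j ≠ 0

/-- The least-squares criterion `Q̂(β) = E_n[(y_i - x_i'β)²]`. -/
noncomputable def Qhat (n : ℕ) {p : ℕ} (x : Fin n → Fin p → ℝ) (y : Fin n → ℝ)
    (β : Fin p → ℝ) : ℝ := En n fun i => (y i - dot (x i) β) ^ 2

/-- The restricted set `Δ_c̄`. -/
def Delta {p : ℕ} (γ : Fin p → ℝ) (T : Finset (Fin p)) (cb : ℝ) : Set (Fin p → ℝ) :=
  {δ | δ ≠ 0 ∧ l1 (scl γ (restr Tᶜ δ)) ≤ cb * l1 (scl γ (restr T δ))}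

/-- The restricted eigenvalue `κ_c̄`. -/
noncomputable def kappa (n : ℕ) {p : ℕ} (x : Fin n → Fin p → ℝ) (γ : Fin p → ℝ)
    (T : Finset (Fin p)) (cb : ℝ) : ℝ :=
  sInf {r | ∃ δ ∈ Delta γ T cb,
    r = Real.sqrt T.card * predNorm n x δ / l1 (scl γ (restr T δ))}

/-- The quantity `κ̃`. -/
noncomputable def kappaTilde (n : ℕ) {p : ℕ} (x : Fin n → Fin p → ℝ) (γ : Fin p → ℝ)
    (T : Finset (Fin p)) : ℝ :=
  sInf {r | ∃ δ : Fin p → ℝ, l1 (scl γ (restr Tᶜ δ)) < l1 (scl γ (restr T δ)) ∧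
    r = Real.sqrt T.card * predNorm n x δ /
      (l1 (scl γ (restr T δ)) - l1 (scl γ (restr Tᶜ δ)))}

/-- The score `S̃ = E_n[x_i(σε_i + r_i)] / √(E_n[(σε_i + r_i)²])`. -/
noncomputable def score (n : ℕ) {p : ℕ} (x : Fin n → Fin p → ℝ) (ε rr : Fin n → ℝ)
    (σ : ℝ) : Fin p → ℝ :=
  fun j => En n (fun i => x i j * (σ * ε i + rr i)) /
    Real.sqrt (En n fun i => (σ * ε i + rr i) ^ 2)

/-- `‖Γ⁻¹ S̃‖_∞ = max_j |S̃_j| / γ_j`. -/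
noncomputable def scoreSup (n : ℕ) {p : ℕ} (x : Fin n → Fin p → ℝ) (ε rr : Fin n → ℝ)
    (σ : ℝ) (γ : Fin p → ℝ) : ℝ :=
  ⨆ j, |score n x ε rr σ j| / γ j

/-- The quantity `ϱ_c̄`. -/
noncomputable def varrho (n : ℕ) {p : ℕ} (x : Fin n → Fin p → ℝ) (γ : Fin p → ℝ)
    (T : Finset (Fin p)) (β₀ : Fin p → ℝ) (S : Fin p → ℝ) (cb : ℝ) : ℝ :=
  sSup {r | ∃ δ ∈ Delta γ T cb, 0 < predNorm n x δ ∧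
    l1 (scl γ (δ + β₀)) ≤ cb * l1 (scl γ β₀) ∧ r = |dot S δ| / predNorm n x δ}

/-- Quadratic form `δ'Mδ`. -/
noncomputable def quadForm {p : ℕ} (M : Fin p → Fin p → ℝ) (δ : Fin p → ℝ) : ℝ :=
  ∑ j, ∑ k, δ j * M j k * δ k

/-- Maximal `m`-sparse eigenvalue `φ_max(m, M)`. -/
noncomputable def phiMax {p : ℕ} (M : Fin p → Fin p → ℝ) (T : Finset (Fin p)) (m : ℕ) : ℝ :=
  sSup {r | ∃ δ : Fin p → ℝ, δ ≠ 0 ∧ (supp δ \ T).card ≤ m ∧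
    r = quadForm M δ / ∑ j, (δ j) ^ 2}

/-- Minimal `m`-sparse eigenvalue `φ_min(m, M)`. -/
noncomputable def phiMin {p : ℕ} (M : Fin p → Fin p → ℝ) (T : Finset (Fin p)) (m : ℕ) : ℝ :=
  sInf {r | ∃ δ : Fin p → ℝ, δ ≠ 0 ∧ (supp δ \ T).card ≤ m ∧
    r = quadForm M δ / ∑ j, (δ j) ^ 2}

/-- Gram matrix `E_n[x_i x_i']`. -/
noncomputable def gram (n : ℕ) {p : ℕ} (x : Fin n → Fin p → ℝ) : Fin p → Fin p → ℝ :=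
  fun j k => En n fun i => x i j * x i k

/-- Rescaled Gram matrix `Γ⁻¹ E_n[x_i x_i'] Γ⁻¹`. -/
noncomputable def rgram (n : ℕ) {p : ℕ} (x : Fin n → Fin p → ℝ) (γ : Fin p → ℝ) :
    Fin p → Fin p → ℝ :=
  fun j k => gram n x j k / (γ j * γ k)

lemma En_sq_nonneg (n : ℕ) (a : Fin n → ℝ) : 0 ≤ En n fun i => a i ^ 2 := by
  unfold En; positivity

lemma abs_En_mul_le_sqrt_mul_sqrt (n : ℕ) (a b : Fin n → ℝ) :
    |En n fun i => a i * b i| ≤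
      √(En n fun i => a i ^ 2) * √(En n fun i => b i ^ 2) := by
  have hsq : (En n fun i => a i * b i) ^ 2 ≤ (En n fun i => a i ^ 2) * En n fun i => b i ^ 2 := by
    unfold En
    rw [div_pow, div_mul_div_comm, ← sq]
    gcongr
    exact Finset.sum_mul_sq_le_sq_mul_sq _ _ _
  rw [← Real.sqrt_mul (En_sq_nonneg n a), ← Real.sqrt_sq_eq_abs]
  exact Real.sqrt_le_sqrt hsq

lemma En_sub_sq (n : ℕ) (u v : Fin n → ℝ) :
    (En n fun i => (u i - v i) ^ 2) =
      (En n fun i => u i ^ 2) - 2 * (En n fun i => u i * v i) + En n fun i => v i ^ 2 := by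
  simp only [En, sub_sq, Finset.sum_add_distrib, Finset.sum_sub_distrib, mul_assoc,
    ← Finset.mul_sum]
  ring

lemma En_mul_dot (n : ℕ) {p : ℕ} (x : Fin n → Fin p → ℝ) (u : Fin n → ℝ) (δ : Fin p → ℝ) :
    (En n fun i => u i * dot (x i) δ) = ∑ j, (En n fun i => x i j * u i) * δ j := by
  simp only [En, dot, Finset.mul_sum, Finset.sum_div, Finset.sum_mul]
  rw [Finset.sum_comm]
  exact Finset.sum_congr rfl fun j _ => Finset.sum_congr rfl fun i _ => by ring

lemma predNorm_zero (n : ℕ) {p : ℕ} (x : Fin n → Fin p → ℝ) : predNorm n x 0 = 0 := by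
  simp [predNorm, dot, En]

lemma sq_predNorm (n : ℕ) {p : ℕ} (x : Fin n → Fin p → ℝ) (δ : Fin p → ℝ) :
    predNorm n x δ ^ 2 = En n fun i => dot (x i) δ ^ 2 :=
  Real.sq_sqrt (En_sq_nonneg n _)

lemma Qhat_nonneg (n : ℕ) {p : ℕ} (x : Fin n → Fin p → ℝ) (y : Fin n → ℝ) (β : Fin p → ℝ) :
    0 ≤ Qhat n x y β :=
  En_sq_nonneg n _

section L1

variable {p : ℕ} (γ : Fin p → ℝ)

lemma l1_nonneg (v : Fin p → ℝ) : 0 ≤ l1 v :=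
  Finset.sum_nonneg fun j _ => abs_nonneg (v j)

lemma l1_scl_restr (S : Finset (Fin p)) (v : Fin p → ℝ) :
    l1 (scl γ (restr S v)) = ∑ j ∈ S, |γ j * v j| := by
  simp only [l1, scl, restr, mul_zero, apply_ite, abs_zero]
  rw [Finset.sum_ite_mem, Finset.univ_inter]

lemma l1_scl_eq_restr_add_restr_compl (T : Finset (Fin p)) (v : Fin p → ℝ) :
    l1 (scl γ v) = l1 (scl γ (restr T v)) + l1 (scl γ (restr Tᶜ v)) := by
  rw [l1_scl_restr, l1_scl_restr, Finset.sum_add_sum_compl]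
  rfl

lemma l1_scl_sub_le (u v : Fin p → ℝ) : l1 (scl γ (u - v)) ≤ l1 (scl γ u) + l1 (scl γ v) := by
  simp only [l1, scl, Pi.sub_apply, mul_sub, ← Finset.sum_add_distrib]
  exact Finset.sum_le_sum fun j _ => abs_sub _ _

lemma l1_scl_sub_l1_scl_le {T : Finset (Fin p)} {β₀ : Fin p → ℝ} (hβ₀ : ∀ j ∉ T, β₀ j = 0)
    (β : Fin p → ℝ) :
    l1 (scl γ β₀) - l1 (scl γ β) ≤
      l1 (scl γ (restr T (β - β₀))) - l1 (scl γ (restr Tᶜ (β - β₀))) := by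
  rw [l1_scl_restr, l1_scl_restr, l1, l1, ← Finset.sum_sub_distrib,
    ← Finset.sum_add_sum_compl T, sub_eq_add_neg]
  refine add_le_add ?_ ?_
  · refine Finset.sum_le_sum fun j _ => ?_
    calc |scl γ β₀ j| - |scl γ β j| ≤ |scl γ β₀ j - scl γ β j| := abs_sub_abs_le_abs_sub _ _
      _ = |scl γ β j - scl γ β₀ j| := abs_sub_comm _ _
      _ = |γ j * (β - β₀) j| := by simp only [scl, Pi.sub_apply, mul_sub]
  · rw [← Finset.sum_neg_distrib]
    refine Finset.sum_le_sum fun j hj => ?_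
    have hj0 := hβ₀ j (Finset.mem_compl.mp hj)
    simp [scl, hj0]

lemma abs_dot_le_iSup_mul_l1_scl (hγ : ∀ j, 0 < γ j) (S δ : Fin p → ℝ) :
    |dot S δ| ≤ (⨆ j, |S j| / γ j) * l1 (scl γ δ) := by
  rw [l1, Finset.mul_sum]
  refine (Finset.abs_sum_le_sum_abs _ _).trans (Finset.sum_le_sum fun j _ => ?_)
  calc |S j * δ j| = |S j| / γ j * |γ j * δ j| := by
        have := (hγ j).ne'
        rw [abs_mul, abs_mul, abs_of_pos (hγ j)]; field_simp
    _ ≤ (⨆ j, |S j| / γ j) * |scl γ δ j| :=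
        mul_le_mul_of_nonneg_right
          (le_ciSup (f := fun j => |S j| / γ j) (Set.finite_range _).bddAbove j) (abs_nonneg _)

end L1

lemma le_cbar_mul_of_mul_sub_le {L c G u v : ℝ} (hL : 0 < L) (hc : 1 < c)
    (hG : L * (u - v) ≤ G) (hGle : G ≤ L / c * (u + v)) : u ≤ (c + 1) / (c - 1) * v := by
  have hcuv : c * (u - v) ≤ u + v := by
    refine le_of_mul_le_mul_left ?_ hL
    calc L * (c * (u - v)) = c * (L * (u - v)) := by ring
      _ ≤ c * (L / c * (u + v)) := mul_le_mul_of_nonneg_left (hG.trans hGle) (by linarith)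
      _ = L * (u + v) := by field_simp
  rw [div_mul_eq_mul_div, le_div_iff₀ (by linarith)]
  linarith

section Score

variable {n p : ℕ} (x : Fin n → Fin p → ℝ) {ε rr : Fin n → ℝ} {σ : ℝ}

lemma sqrt_mul_dot_score (hQ : 0 < En n fun i => (σ * ε i + rr i) ^ 2) (δ : Fin p → ℝ) :
    √(En n fun i => (σ * ε i + rr i) ^ 2) * dot (score n x ε rr σ) δ =
      En n fun i => (σ * ε i + rr i) * dot (x i) δ := by
  have hq0 : √(En n fun i => (σ * ε i + rr i) ^ 2) ≠ 0 := (Real.sqrt_pos.mpr hQ).ne'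
  rw [En_mul_dot, dot, Finset.mul_sum]
  refine Finset.sum_congr rfl fun j _ => ?_
  rw [score]
  field_simp

lemma abs_dot_score_le_predNorm (hQ : 0 < En n fun i => (σ * ε i + rr i) ^ 2)
    (δ : Fin p → ℝ) : |dot (score n x ε rr σ) δ| ≤ predNorm n x δ := by
  have hq0 := Real.sqrt_pos.mpr hQ
  refine le_of_mul_le_mul_left ?_ hq0
  rw [← abs_of_pos hq0, ← abs_mul, sqrt_mul_dot_score x hQ, abs_of_pos hq0]
  exact abs_En_mul_le_sqrt_mul_sqrt n _ _

variable {y : Fin n → ℝ} {β₀ : Fin p → ℝ}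

lemma Qhat_eq_of_model (hy : ∀ i, y i = dot (x i) β₀ + σ * ε i + rr i) :
    Qhat n x y β₀ = En n fun i => (σ * ε i + rr i) ^ 2 := by
  simp only [Qhat, hy, add_sub_cancel_left, add_assoc]

lemma Qhat_eq_sub_add_sq_predNorm (hy : ∀ i, y i = dot (x i) β₀ + σ * ε i + rr i)
    (hQ : 0 < En n fun i => (σ * ε i + rr i) ^ 2) (β : Fin p → ℝ) :
    Qhat n x y β = Qhat n x y β₀ -
      2 * √(Qhat n x y β₀) * dot (score n x ε rr σ) (β - β₀) + predNorm n x (β - β₀) ^ 2 := by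
  have hres : ∀ i, y i - dot (x i) β = (σ * ε i + rr i) - dot (x i) (β - β₀) := fun i => by
    simp only [hy, dot, Pi.sub_apply, mul_sub, Finset.sum_sub_distrib]
    ring
  rw [Qhat_eq_of_model x hy, mul_assoc, sqrt_mul_dot_score x hQ, sq_predNorm, ← En_sub_sq]
  simp only [Qhat, hres]

lemma sqrt_Qhat_sub_dot_score_le (hy : ∀ i, y i = dot (x i) β₀ + σ * ε i + rr i)
    (hQ : 0 < En n fun i => (σ * ε i + rr i) ^ 2) (β : Fin p → ℝ) :
    √(Qhat n x y β₀) - dot (score n x ε rr σ) (β - β₀) ≤ √(Qhat n x y β) := by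
  have hG := abs_le.mp (abs_dot_score_le_predNorm x hQ (β - β₀))
  refine Real.le_sqrt_of_sq_le ?_
  rw [Qhat_eq_sub_add_sq_predNorm x hy hQ β, sub_sq, Real.sq_sqrt (Qhat_nonneg ..)]
  nlinarith [predNorm n x (β - β₀)]

end Score

section Variational

variable {n p : ℕ} (x : Fin n → Fin p → ℝ) (γ : Fin p → ℝ) (T : Finset (Fin p))

lemma varrho_nonneg (β₀ S : Fin p → ℝ) (cb : ℝ) : 0 ≤ varrho n x γ T β₀ S cb :=
  Real.sSup_nonneg fun _ ⟨_, _, hpos, _, hr⟩ => hr ▸ div_nonneg (abs_nonneg _) hpos.le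

lemma abs_dot_le_varrho_mul_predNorm {β₀ S : Fin p → ℝ} {cb : ℝ}
    (hS : ∀ δ, |dot S δ| ≤ predNorm n x δ) {δ : Fin p → ℝ}
    (hcone : l1 (scl γ (restr Tᶜ δ)) ≤ cb * l1 (scl γ (restr T δ)))
    (hl1 : l1 (scl γ (δ + β₀)) ≤ cb * l1 (scl γ β₀)) :
    |dot S δ| ≤ varrho n x γ T β₀ S cb * predNorm n x δ := by
  have ht0 : 0 ≤ predNorm n x δ := Real.sqrt_nonneg _
  rcases ht0.eq_or_lt with ht | ht
  · rw [← ht, mul_zero]; exact ht ▸ hS δ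
  have hδ : δ ≠ 0 := by rintro rfl; exact ht.ne' (predNorm_zero n x)
  rw [← div_le_iff₀ ht]
  refine le_csSup ⟨1, ?_⟩ ⟨δ, ⟨hδ, hcone⟩, ht, hl1, rfl⟩
  rintro _ ⟨δ', -, hpos, -, rfl⟩
  exact (div_le_one hpos).mpr (hS δ')

lemma l1_restr_sub_le_div_kappaTilde (hκ : 0 < kappaTilde n x γ T) (δ : Fin p → ℝ) :
    l1 (scl γ (restr T δ)) - l1 (scl γ (restr Tᶜ δ)) ≤
      √T.card * predNorm n x δ / kappaTilde n x γ T := by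
  have hrhs : 0 ≤ √T.card * predNorm n x δ := mul_nonneg (Real.sqrt_nonneg _) (Real.sqrt_nonneg _)
  rcases le_or_gt (l1 (scl γ (restr T δ))) (l1 (scl γ (restr Tᶜ δ))) with hle | hlt
  · exact (sub_nonpos.mpr hle).trans (div_nonneg hrhs hκ.le)
  rw [le_div_iff₀ hκ, mul_comm, ← le_div_iff₀ (sub_pos.mpr hlt)]
  refine csInf_le ⟨0, ?_⟩ ⟨δ, hlt, rfl⟩
  rintro _ ⟨δ', hδ', rfl⟩
  exact div_nonneg (mul_nonneg (Real.sqrt_nonneg _) (Real.sqrt_nonneg _)) (sub_pos.mpr hδ').le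

end Variational

/-- The final quadratic inequality in `t = ‖β̂ - β₀‖_{2,n}`, with `q₀ = √Q̂(β₀)` and
`q = √Q̂(β̂)`. -/
lemma le_of_sqrt_lasso_ineqs {t q q₀ G ϱ ρ : ℝ} (ht : 0 ≤ t) (hq₀ : 0 ≤ q₀) (hϱ : 0 ≤ ϱ)
    (hρ₀ : 0 ≤ ρ) (hρ : ρ < 1) (hq : 0 ≤ q) (hid : q ^ 2 = q₀ ^ 2 - 2 * q₀ * G + t ^ 2)
    (hqle : q ≤ q₀ + ρ * t) (hG : G ≤ ϱ * t) :
    t ≤ 2 * q₀ * ((ϱ + ρ) / (1 - ρ ^ 2)) := by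
  have h1ρ : 0 < 1 - ρ ^ 2 := by nlinarith
  rw [← mul_div_assoc, le_div_iff₀ h1ρ]
  have hq2 : q ^ 2 ≤ (q₀ + ρ * t) ^ 2 := pow_le_pow_left₀ hq hqle 2
  have hGq : q₀ * G ≤ q₀ * (ϱ * t) := mul_le_mul_of_nonneg_left hG hq₀
  rcases ht.eq_or_lt with rfl | htpos
  · simp only [zero_mul]; positivity
  refine le_of_mul_le_mul_right ?_ htpos
  nlinarith

theorem statement_5_general (n p : ℕ) (hn : 1 ≤ n)
    (x : Fin n → Fin p → ℝ) (β₀ γ : Fin p → ℝ) (hγ : ∀ j, 1 ≤ γ j)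
    (σ : ℝ) (ε rr : Fin n → ℝ) (y : Fin n → ℝ)
    (hy : ∀ i, y i = dot (x i) β₀ + σ * ε i + rr i)
    (hQ : 0 < En n fun i => (σ * ε i + rr i) ^ 2)
    (lam : ℝ) (hlam : 0 < lam)
    (c : ℝ) (hc : 1 < c)
    (hdom : c * scoreSup n x ε rr σ γ ≤ lam / n)
    (βh : Fin p → ℝ)
    (hmin : ∀ β : Fin p → ℝ,
      Real.sqrt (Qhat n x y βh) + lam / n * l1 (scl γ βh) ≤
        Real.sqrt (Qhat n x y β) + lam / n * l1 (scl γ β))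
    (hκ : 0 < kappaTilde n x γ (supp β₀))
    (ρ : ℝ)
    (hρdef : ρ = lam * Real.sqrt (supp β₀).card / (n * kappaTilde n x γ (supp β₀)))
    (hρ : ρ < 1) :
    predNorm n x (βh - β₀) ≤
      2 * Real.sqrt (Qhat n x y β₀) *
        ((varrho n x γ (supp β₀) β₀ (score n x ε rr σ) ((c + 1) / (c - 1)) + ρ) /
          (1 - ρ ^ 2)) := by
  set T := supp β₀
  set δ := βh - β₀
  set S := score n x ε rr σ
  have hL : 0 < lam / n := div_pos hlam (by exact_mod_cast hn)
  have hT : ∀ j ∉ T, β₀ j = 0 := fun j hj => by simpa [T, supp] using hj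
  have hpen := l1_scl_sub_l1_scl_le γ hT βh
  have hGpen : lam / n * (l1 (scl γ βh) - l1 (scl γ β₀)) ≤ dot S δ := by
    linarith [hmin β₀, sqrt_Qhat_sub_dot_score_le x hy hQ βh]
  have hsup : scoreSup n x ε rr σ γ ≤ lam / n / c := (le_div_iff₀' (by linarith)).mpr hdom
  have hGdom : dot S δ ≤ lam / n / c * l1 (scl γ δ) :=
    (le_abs_self _).trans <|
      (abs_dot_le_iSup_mul_l1_scl γ (fun j => one_pos.trans_le (hγ j)) S δ).trans
        (mul_le_mul_of_nonneg_right hsup (l1_nonneg _))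
  have hl1 : l1 (scl γ βh) ≤ (c + 1) / (c - 1) * l1 (scl γ β₀) :=
    le_cbar_mul_of_mul_sub_le hL hc hGpen
      (hGdom.trans (by gcongr; exact l1_scl_sub_le γ βh β₀))
  have hcone : l1 (scl γ (restr Tᶜ δ)) ≤ (c + 1) / (c - 1) * l1 (scl γ (restr T δ)) :=
    le_cbar_mul_of_mul_sub_le hL hc
      ((mul_le_mul_of_nonneg_left (by linarith) hL.le).trans hGpen)
      (by rwa [add_comm, ← l1_scl_eq_restr_add_restr_compl])
  have hGϱ : dot S δ ≤ varrho n x γ T β₀ S ((c + 1) / (c - 1)) * predNorm n x δ :=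
    (le_abs_self _).trans <| abs_dot_le_varrho_mul_predNorm x γ T
      (abs_dot_score_le_predNorm x hQ) hcone (by rwa [sub_add_cancel])
  have hρ₀ : 0 ≤ ρ := hρdef ▸ by positivity
  have hup : √(Qhat n x y βh) ≤ √(Qhat n x y β₀) + ρ * predNorm n x δ :=
    calc √(Qhat n x y βh) ≤ √(Qhat n x y β₀) + lam / n * (l1 (scl γ β₀) - l1 (scl γ βh)) := by
          linarith [hmin β₀]
      _ ≤ √(Qhat n x y β₀) + lam / n * (√T.card * predNorm n x δ / kappaTilde n x γ T) := by
          gcongr; exact hpen.trans (l1_restr_sub_le_div_kappaTilde x γ T hκ δ)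
      _ = √(Qhat n x y β₀) + ρ * predNorm n x δ := by rw [hρdef]; ring
  refine le_of_sqrt_lasso_ineqs (Real.sqrt_nonneg _) (Real.sqrt_nonneg _) (varrho_nonneg ..)
    hρ₀ hρ (Real.sqrt_nonneg _) ?_ hup hGϱ
  rw [Real.sq_sqrt (Qhat_nonneg ..), Real.sq_sqrt (Qhat_nonneg ..)]
  exact Qhat_eq_sub_add_sq_predNorm x hy hQ βh

/-- Theorem 1, prediction norm bound:
`‖β̂ - β₀‖_{2,n} ≤ 2 √Q̂(β₀) (ϱ_c̄ + ρ̄)/(1 - ρ̄²)`. -/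
theorem statement_5 (n p : ℕ) (hn : 1 ≤ n) (hp : 1 ≤ p)
    (x : Fin n → Fin p → ℝ) (β₀ γ : Fin p → ℝ) (hγ : ∀ j, 1 ≤ γ j)
    (hs : 1 ≤ (supp β₀).card)
    (σ : ℝ) (hσ : 0 ≤ σ) (ε rr : Fin n → ℝ) (y : Fin n → ℝ)
    (hy : ∀ i, y i = dot (x i) β₀ + σ * ε i + rr i)
    (hQ : 0 < En n fun i => (σ * ε i + rr i) ^ 2)
    (lam : ℝ) (hlam : 0 < lam)
    (c : ℝ) (hc : 1 < c)
    (hdom : c * scoreSup n x ε rr σ γ ≤ lam / n)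
    (βh : Fin p → ℝ)
    (hmin : ∀ β : Fin p → ℝ,
      Real.sqrt (Qhat n x y βh) + lam / n * l1 (scl γ βh) ≤
        Real.sqrt (Qhat n x y β) + lam / n * l1 (scl γ β))
    (hκ : 0 < kappaTilde n x γ (supp β₀))
    (ρ : ℝ)
    (hρdef : ρ = lam * Real.sqrt (supp β₀).card / (n * kappaTilde n x γ (supp β₀)))
    (hρ : ρ < 1) :
    predNorm n x (βh - β₀) ≤
      2 * Real.sqrt (Qhat n x y β₀) *
        ((varrho n x γ (supp β₀) β₀ (score n x ε rr σ) ((c + 1) / (c - 1)) + ρ) /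
          (1 - ρ ^ 2)) :=
  statement_5_general n p hn x β₀ γ hγ σ ε rr y hy hQ lam hlam c hc hdom βh hmin hκ ρ hρdef hρ

end SqrtLasso
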